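/- arXiv:2212.00319 — 4 statements merged into one kernel-verified Lean document; each statement's English description precedes it below -/
import Mathlib

section
/- If (J, u*) is observable with J Hermitian, then the matrices A = [[J, u], [−u*, a]] and J have no common eigenvalues: σ(A) ∩ σ(J) = ∅. -/
/-! Let `μ` be a common eigenvalue, with `J w = μ w` and `A (x, t) = μ (x, t)`. Since `J` is
Hermitian, `μ` is real and `w*` is a left eigenvector of `J` for `μ`; pairing it with the first
block row `J x + t u = μ x` leaves `t (w* u) = 0`. Observability (the Hautus test) rules out
`u* w = 0`, so `t = 0`. Then `J x = μ x` and `u* x = 0`, and observability again gives `x = 0`. -/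

open Matrix

/-- Observability of the pair `(J, u*)`. -/
def IsObservable {m : ℕ} (J : Matrix (Fin m) (Fin m) ℂ) (u : Fin m → ℂ) : Prop :=
  ∀ lam : ℂ,
    (Matrix.fromRows (lam • (1 : Matrix (Fin m) (Fin m) ℂ) - J)
      (Matrix.replicateRow Unit (star u))).rank = m

namespace Matrix

variable {K n : Type*}

theorem mem_spectrum_iff_exists_mulVec_eq_smul [Field K] [Fintype n] [DecidableEq n]
    (A : Matrix n n K) (μ : K) : μ ∈ spectrum K A ↔ ∃ v ≠ 0, A *ᵥ v = μ • v := by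
  simp only [← spectrum_toLin', ← Module.End.hasEigenvalue_iff_mem_spectrum,
    Module.End.hasEigenvalue_iff, Module.End.mem_eigenspace_iff, toLin'_apply, ne_eq,
    Submodule.ne_bot_iff, and_comm]

theorem mulVec_injective_of_rank_eq_card [Field K] [Fintype n] {m : Type*}
    (B : Matrix m n K) (hB : B.rank = Fintype.card n) : Function.Injective B.mulVec := by
  have := LinearMap.finrank_range_add_finrank_ker B.mulVecLin
  rw [← rank, hB, Module.finrank_fintype_fun_eq_card, add_eq_left,
    Submodule.finrank_eq_zero, LinearMap.ker_eq_bot] at this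
  exact this

theorem fromBlocks_replicateCol_replicateRow_mulVec_eq_smul_iff [CommRing K] [Fintype n]
    (J : Matrix n n K) (u r : n → K) (d μ : K) (v : n ⊕ Unit → K) :
    fromBlocks J (replicateCol Unit u) (replicateRow Unit r) (of fun _ _ => d) *ᵥ v = μ • v ↔
      J *ᵥ (v ∘ Sum.inl) + v (Sum.inr ()) • u = μ • (v ∘ Sum.inl) ∧
        r ⬝ᵥ (v ∘ Sum.inl) + d * v (Sum.inr ()) = μ * v (Sum.inr ()) := by
  have hcol : replicateCol Unit u *ᵥ (v ∘ Sum.inr) = v (Sum.inr ()) • u := by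
    ext; simp [mulVec, dotProduct, mul_comm]
  have hcorner : ((of fun _ _ => d) *ᵥ (v ∘ Sum.inr)) () = d * v (Sum.inr ()) := by
    simp [mulVec, dotProduct]
  rw [fromBlocks_mulVec, ← Sum.elim_comp_inl_inr (μ • v), Sum.elim_eq_iff, hcol,
    funext_iff (α := Unit), Unique.forall_iff, Pi.add_apply, replicateRow_mulVec_eq_const,
    hcorner]
  rfl

section Hermitian

open scoped ComplexOrder

variable [RCLike K] [Fintype n] {J : Matrix n n K} {w : n → K} {μ : K}

theorem IsHermitian.star_eq_of_mulVec_eq_smul (hJ : J.IsHermitian) (hw : w ≠ 0)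
    (hJw : J *ᵥ w = μ • w) : star μ = μ := by
  have hww : star w ⬝ᵥ w ≠ 0 := fun h => hw (dotProduct_star_self_eq_zero.mp h)
  refine mul_right_cancel₀ hww ?_
  calc star μ * (star w ⬝ᵥ w) = star (J *ᵥ w) ⬝ᵥ w := by simp [hJw, star_smul]
    _ = star w ⬝ᵥ (J *ᵥ w) := by rw [star_mulVec, hJ.eq, dotProduct_mulVec]
    _ = μ * (star w ⬝ᵥ w) := by simp [hJw]

theorem IsHermitian.star_dotProduct_mulVec_of_mulVec_eq_smul (hJ : J.IsHermitian)
    (hw : w ≠ 0) (hJw : J *ᵥ w = μ • w) (x : n → K) :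
    star w ⬝ᵥ (J *ᵥ x) = μ * (star w ⬝ᵥ x) := by
  rw [dotProduct_mulVec, ← hJ.eq, ← star_mulVec, hJw, star_smul,
    hJ.star_eq_of_mulVec_eq_smul hw hJw, smul_dotProduct, smul_eq_mul]

end Hermitian

end Matrix

theorem IsObservable.eq_zero_of_mulVec_eq_smul {m : ℕ} {J : Matrix (Fin m) (Fin m) ℂ}
    {u : Fin m → ℂ} (hobs : IsObservable J u) {μ : ℂ} {w : Fin m → ℂ} (hJw : J *ᵥ w = μ • w)
    (huw : star u ⬝ᵥ w = 0) : w = 0 := by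
  refine mulVec_injective_of_rank_eq_card _ ((hobs μ).trans (Fintype.card_fin m).symm) ?_
  rw [fromRows_mulVec, mulVec_zero, sub_mulVec, smul_mulVec, one_mulVec, hJw, sub_self,
    replicateRow_mulVec_eq_const, huw, Function.const_zero, Sum.elim_zero_zero]

/-- If `(J, u*)` is observable with `J` Hermitian and `a ∈ ℝ`, then
`A = [[J, u], [-u*, a]]` and `J` have no common eigenvalues. -/
theorem stmt_4 {m : ℕ} (J : Matrix (Fin m) (Fin m) ℂ) (hJ : J.IsHermitian)
    (u : Fin m → ℂ) (a : ℝ) (hobs : IsObservable J u) :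
    let A : Matrix (Fin m ⊕ Unit) (Fin m ⊕ Unit) ℂ :=
      Matrix.fromBlocks J (Matrix.replicateCol Unit u) (-(Matrix.replicateRow Unit (star u)))
        (Matrix.of fun _ _ => (a : ℂ))
    spectrum ℂ A ∩ spectrum ℂ J = ∅ := by
  intro A
  refine Set.eq_empty_of_forall_notMem fun μ ⟨hμA, hμJ⟩ => ?_
  obtain ⟨w, hw, hJw⟩ := (mem_spectrum_iff_exists_mulVec_eq_smul J μ).1 hμJ
  obtain ⟨v, hv, hAv⟩ := (mem_spectrum_iff_exists_mulVec_eq_smul A μ).1 hμA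
  obtain ⟨htop, hbot⟩ :=
    (fromBlocks_replicateCol_replicateRow_mulVec_eq_smul_iff J u (-star u) a μ v).1 hAv
  set x := v ∘ Sum.inl
  set t := v (Sum.inr ())
  have hwu : star w ⬝ᵥ u ≠ 0 := by
    rw [star_dotProduct, star_ne_zero]
    exact fun h => hw (hobs.eq_zero_of_mulVec_eq_smul hJw h)
  have ht : t = 0 := by
    have := congrArg (star w ⬝ᵥ ·) htop
    simp only [dotProduct_add, hJ.star_dotProduct_mulVec_of_mulVec_eq_smul hw hJw,
      dotProduct_smul, smul_eq_mul, add_eq_left] at this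
    exact (mul_eq_zero.1 this).resolve_right hwu
  have hx : x = 0 := by
    refine hobs.eq_zero_of_mulVec_eq_smul (by simpa [ht] using htop) ?_
    simpa [ht] using hbot
  exact hv (funext fun | .inl i => congrFun hx i | .inr () => ht)
end

section
/- Let h(λ) = λ − a and g(λ) = −∑_{j=1}^{n-1} d_j/(λ − μ_j) with d_j > 0 and distinct real μ_j. Then on each bounded interval (μ_{j+1}, μ_j) between consecutive poles, the equation h(λ) = g(λ) has at least one and at most three real solutions counted with multiplicity. -/
/-!
On `(μ_{j+1}, μ_j)` the polynomial `interP a μ d` is `Q · F`, where `Q = ∏ₖ (X - μₖ)` has no zero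
there and `F(λ) = λ - a + ∑ₖ dₖ / (λ - μₖ)`. Each quotient `R / Qⁿ` of polynomials has derivative
`W / Qⁿ⁺¹` with `W` again a polynomial, and Rolle's theorem together with the drop of root
multiplicities shows that `R` has at most one root more in the interval than `W`, counted with
multiplicity. Since `F''' = -6 ∑ₖ dₖ / (λ - μₖ)⁴ < 0`, three steps bound the number of roots by
three. For the lower bound, `interP` takes the value `dₖ ∏_{i ≠ k} (μₖ - μᵢ)` at `μₖ`, and these
values have opposite signs at adjacent poles.
-/

open Finset Polynomial

/-- The numerator polynomial of `(λ - a) - g(λ)`: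
`p(λ) = (λ - a)∏ⱼ(λ - μⱼ) + ∑ⱼ dⱼ ∏_{k ≠ j}(λ - μₖ)`. -/
noncomputable def interP {m : ℕ} (a : ℝ) (μ d : Fin m → ℝ) : Polynomial ℝ :=
  (X - C a) * ∏ j, (X - C (μ j)) +
    ∑ j, C (d j) * ∏ k ∈ Finset.univ.erase j, (X - C (μ k))

noncomputable def derivQuotNumer (Q R : ℝ[X]) (n : ℕ) : ℝ[X] :=
  derivative R * Q - n * (derivative Q * R)

theorem hasDerivAt_eval_div_eval_pow (Q R : ℝ[X]) (n : ℕ) {x : ℝ} (hx : Q.eval x ≠ 0) :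
    HasDerivAt (fun y => R.eval y / Q.eval y ^ n)
      ((derivQuotNumer Q R n).eval x / Q.eval x ^ (n + 1)) x := by
  refine ((R.hasDerivAt x).div ((Q.hasDerivAt x).fun_pow n) (pow_ne_zero n hx)).congr_deriv ?_
  rcases n with _ | n
  · simp [derivQuotNumer, hx]
  · simp only [derivQuotNumer, eval_sub, eval_mul, eval_natCast, Nat.add_sub_cancel]
    field_simp
    ring

theorem rootMultiplicity_sub_one_le_derivQuotNumer {Q R : ℝ[X]} {n : ℕ}
    (hW : derivQuotNumer Q R n ≠ 0) (x : ℝ) :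
    R.rootMultiplicity x - 1 ≤ (derivQuotNumer Q R n).rootMultiplicity x := by
  rw [le_rootMultiplicity_iff hW]
  have hR := R.pow_rootMultiplicity_dvd x
  have hR' := (pow_dvd_pow _ (Nat.sub_le _ 1)).trans hR
  exact dvd_sub ((pow_sub_one_dvd_derivative_of_pow_dvd hR).mul_right _)
    ((hR'.mul_left _).mul_left _)

theorem exists_isRoot_derivQuotNumer {Q R : ℝ[X]} (n : ℕ) {x y : ℝ} (hxy : x < y)
    (hQ : ∀ z ∈ Set.Icc x y, Q.eval z ≠ 0) (hx : R.IsRoot x) (hy : R.IsRoot y) :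
    ∃ z ∈ Set.Ioo x y, (derivQuotNumer Q R n).IsRoot z := by
  have hderiv := fun z (hz : z ∈ Set.Icc x y) => hasDerivAt_eval_div_eval_pow Q R n (hQ z hz)
  obtain ⟨z, hz, hz0⟩ := exists_hasDerivAt_eq_zero hxy
    (fun z hz => (hderiv z hz).continuousAt.continuousWithinAt)
    (by simp [hx.eq_zero, hy.eq_zero]) (fun z hz => hderiv z (Set.Ioo_subset_Icc_self hz))
  exact ⟨z, hz, by simpa [hQ z (Set.Ioo_subset_Icc_self hz)] using hz0⟩

theorem card_roots_filter_le_of_rolle {R W : ℝ[X]} {s : Set ℝ} [s.OrdConnected]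
    [DecidablePred (· ∈ s)] (hW : W ≠ 0)
    (hmult : ∀ x, R.rootMultiplicity x - 1 ≤ W.rootMultiplicity x)
    (hrolle : ∀ x ∈ s, ∀ y ∈ s, x < y → R.IsRoot x → R.IsRoot y →
      ∃ z ∈ Set.Ioo x y, W.IsRoot z) :
    Multiset.card (R.roots.filter (· ∈ s)) ≤ Multiset.card (W.roots.filter (· ∈ s)) + 1 := by
  set M := R.roots.filter (· ∈ s)
  set N := W.roots.filter (· ∈ s)
  set T := N.toFinset \ M.toFinset
  have hinter : M.toFinset.card ≤ T.card + 1 := by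
    refine Finset.card_le_sdiff_of_interleaved fun x hx y hy hxy _ => ?_
    simp only [M, Multiset.mem_toFinset, Multiset.mem_filter, mem_roots'] at hx hy
    obtain ⟨z, hz, hWz⟩ := hrolle x hx.2 y hy.2 hxy hx.1.2 hy.1.2
    have hzs : z ∈ s := Set.Icc_subset s hx.2 hy.2 (Set.Ioo_subset_Icc_self hz)
    exact ⟨z, by simpa [N, mem_roots hW, hzs] using hWz, hz⟩
  -- each root of `R` in `s` of multiplicity `r` is a root of `W` of multiplicity `≥ r - 1`,
  -- and `T` collects the further roots of `W` supplied by Rolle's theorem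
  have hle : M - M.dedup + T.val ≤ N := by
    rw [Multiset.le_iff_count]
    intro x
    by_cases hxM : x ∈ M
    · have hxs : x ∈ s := (Multiset.mem_filter.1 hxM).2
      have hxT : x ∉ T := fun h => (Finset.mem_sdiff.1 h).2 (Multiset.mem_toFinset.2 hxM)
      rw [Multiset.count_add, Multiset.count_eq_zero.2 hxT, Multiset.count_sub,
        Multiset.count_dedup, if_pos hxM, Multiset.count_filter_of_pos hxs,
        Multiset.count_filter_of_pos hxs, count_roots, count_roots]
      exact hmult x
    · have hTN : T.val ≤ N :=
        (Finset.val_le_iff.2 Finset.sdiff_subset).trans (N.toFinset_val ▸ N.dedup_le)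
      rw [Multiset.count_add, Multiset.count_sub, Multiset.count_eq_zero.2 hxM, zero_tsub,
        zero_add]
      exact Multiset.count_le_of_le x hTN
  calc Multiset.card M = Multiset.card (M - M.dedup) + M.toFinset.card := by
        rw [Multiset.card_toFinset, ← Multiset.card_add, tsub_add_cancel_of_le M.dedup_le]
    _ ≤ Multiset.card (M - M.dedup + T.val) + 1 := by
        rw [Multiset.card_add, add_assoc]
        exact Nat.add_le_add_left hinter _
    _ ≤ Multiset.card N + 1 := Nat.add_le_add_right (Multiset.card_le_card hle) 1

theorem card_roots_filter_le_derivQuotNumer {Q R : ℝ[X]} (n : ℕ) {s : Set ℝ} [s.OrdConnected]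
    [DecidablePred (· ∈ s)] (hQ : ∀ x ∈ s, Q.eval x ≠ 0) (hW : derivQuotNumer Q R n ≠ 0) :
    Multiset.card (R.roots.filter (· ∈ s)) ≤
      Multiset.card ((derivQuotNumer Q R n).roots.filter (· ∈ s)) + 1 :=
  card_roots_filter_le_of_rolle hW (rootMultiplicity_sub_one_le_derivQuotNumer hW)
    fun _ hx _ hy hxy hRx hRy =>
      exists_isRoot_derivQuotNumer n hxy (fun z hz => hQ z (Set.Icc_subset s hx hy hz)) hRx hRy

theorem eqOn_derivQuotNumer_div {Q R : ℝ[X]} {n : ℕ} {s : Set ℝ} (hs : IsOpen s)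
    (hQ : ∀ x ∈ s, Q.eval x ≠ 0) {f f' : ℝ → ℝ}
    (hf : Set.EqOn (fun x => R.eval x / Q.eval x ^ n) f s)
    (hf' : ∀ x ∈ s, HasDerivAt f (f' x) x) :
    Set.EqOn (fun x => (derivQuotNumer Q R n).eval x / Q.eval x ^ (n + 1)) f' s := fun x hx =>
  (hasDerivAt_eval_div_eval_pow Q R n (hQ x hx)).unique
    ((hf' x hx).congr_of_eventuallyEq (hf.eventuallyEq_of_mem (hs.mem_nhds hx)))

theorem ne_zero_and_card_roots_filter_le_of_hasDerivAt {Q : ℝ[X]} {s : Set ℝ} (hs : IsOpen s)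
    [s.OrdConnected] [DecidablePred (· ∈ s)] (hs₀ : s.Nonempty) (hQ : ∀ x ∈ s, Q.eval x ≠ 0)
    (k : ℕ) (f : ℕ → ℝ → ℝ) (hf : ∀ i < k, ∀ x ∈ s, HasDerivAt (f i) (f (i + 1) x) x)
    (hfk : ∀ x ∈ s, f k x ≠ 0) (R : ℝ[X]) (n : ℕ)
    (hR : Set.EqOn (fun x => R.eval x / Q.eval x ^ n) (f 0) s) :
    R ≠ 0 ∧ Multiset.card (R.roots.filter (· ∈ s)) ≤ k := by
  induction k generalizing f R n with
  | zero =>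
    have hRs : ∀ x ∈ s, ¬R.IsRoot x := fun x hx hRx =>
      hfk x hx ((hR hx).symm.trans (by simp [hRx.eq_zero]))
    obtain ⟨x, hx⟩ := hs₀
    refine ⟨fun h => hRs x hx (by simp [h]), ?_⟩
    rw [nonpos_iff_eq_zero, Multiset.card_eq_zero, Multiset.filter_eq_nil]
    exact fun x hxR hx => hRs x hx (isRoot_of_mem_roots hxR)
  | succ k ih =>
    obtain ⟨hW, hcard⟩ := ih (fun i => f (i + 1)) (fun i hi => hf (i + 1) (by omega)) hfk
      (derivQuotNumer Q R n) (n + 1) (eqOn_derivQuotNumer_div hs hQ hR (hf 0 k.succ_pos))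
    refine ⟨fun h => hW (by simp [derivQuotNumer, h]), ?_⟩
    exact (card_roots_filter_le_derivQuotNumer n hQ hW).trans (by omega)

section Secular

variable {m : ℕ} (a : ℝ) (μ d : Fin m → ℝ)

noncomputable def poleSum (e : ℤ) (x : ℝ) : ℝ :=
  ∑ k, d k * (x - μ k) ^ e

/-- The `i`-th derivative of `h - g`, i.e. of `λ ↦ λ - a + ∑ⱼ dⱼ / (λ - μⱼ)`. -/
noncomputable def secularDeriv (i : ℕ) (x : ℝ) : ℝ :=
  (derivative^[i] (X - C a)).eval x +
    (∏ t ∈ range i, ((-1 : ℝ) - t)) * poleSum μ d (-1 - i) x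

variable {μ d}

theorem hasDerivAt_poleSum (e : ℤ) {x : ℝ} (hx : ∀ k, x ≠ μ k) :
    HasDerivAt (poleSum μ d e) (e * poleSum μ d (e - 1) x) x := by
  have h : HasDerivAt (poleSum μ d e) (∑ k, d k * (e * (x - μ k) ^ (e - 1))) x :=
    HasDerivAt.fun_sum fun k _ => ((hasDerivAt_zpow e (x - μ k)
      (Or.inl (sub_ne_zero.2 (hx k)))).comp_sub_const x (μ k)).const_mul (d k)
  refine h.congr_deriv ?_
  rw [poleSum, mul_sum]
  exact sum_congr rfl fun k _ => by ring

theorem hasDerivAt_secularDeriv (i : ℕ) {x : ℝ} (hx : ∀ k, x ≠ μ k) :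
    HasDerivAt (secularDeriv a μ d i) (secularDeriv a μ d (i + 1) x) x := by
  have h : HasDerivAt (secularDeriv a μ d i) _ x :=
    ((derivative^[i] (X - C a)).hasDerivAt x).fun_add
      ((hasDerivAt_poleSum (d := d) (-1 - i) hx).const_mul (∏ t ∈ range i, ((-1 : ℝ) - t)))
  refine h.congr_deriv ?_
  rw [secularDeriv, Function.iterate_succ_apply', prod_range_succ]
  push_cast
  ring_nf

theorem secularDeriv_three_neg [Nonempty (Fin m)] (hd : ∀ k, 0 < d k) {x : ℝ}
    (hx : ∀ k, x ≠ μ k) : secularDeriv a μ d 3 x < 0 := by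
  have hpos : 0 < poleSum μ d (-4) x :=
    sum_pos (fun k _ => mul_pos (hd k) (Even.zpow_pos (by decide) (sub_ne_zero.2 (hx k))))
      univ_nonempty
  have h3 : secularDeriv a μ d 3 x = -6 * poleSum μ d (-4) x := by
    norm_num [secularDeriv, prod_range_succ]
  rw [h3]
  exact mul_neg_of_neg_of_pos (by norm_num) hpos

end Secular

theorem exists_mem_Ioo_eq_zero_of_mul_neg {f : ℝ → ℝ} {a b : ℝ} (hab : a ≤ b)
    (hf : ContinuousOn f (Set.Icc a b)) (h : f a * f b < 0) : ∃ x ∈ Set.Ioo a b, f x = 0 := by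
  rcases mul_neg_iff.1 h with ⟨ha, hb⟩ | ⟨ha, hb⟩
  · exact intermediate_value_Ioo' hab hf ⟨hb, ha⟩
  · exact intermediate_value_Ioo hab hf ⟨ha, hb⟩

theorem StrictAnti.ne_of_mem_Ioo_succ {m : ℕ} {μ : Fin m → ℝ} (hμ : StrictAnti μ) {j : Fin m}
    (hj : (j : ℕ) + 1 < m) {x : ℝ} (hx : x ∈ Set.Ioo (μ ⟨j + 1, hj⟩) (μ j)) (k : Fin m) :
    x ≠ μ k := by
  rcases le_or_gt k j with hk | hk
  · exact (hx.2.trans_le (hμ.antitone hk)).ne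
  · exact ((hμ.antitone (Fin.mk_le_of_le_val hk)).trans_lt hx.1).ne'

section InterP

variable {m : ℕ} (a : ℝ) {μ d : Fin m → ℝ}

theorem interP_eval_eq_mul_secularDeriv {x : ℝ} (hx : ∀ k, x ≠ μ k) :
    (interP a μ d).eval x = (∏ k, (X - C (μ k))).eval x * secularDeriv a μ d 0 x := by
  simp only [interP, secularDeriv, poleSum, eval_add, eval_mul, eval_sub, eval_X, eval_C,
    eval_prod, eval_finsetSum, Function.iterate_zero_apply, prod_range_zero, one_mul,
    Nat.cast_zero, sub_zero, zpow_neg_one]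
  rw [mul_comm, mul_add, mul_sum]
  congr 1
  refine sum_congr rfl fun k _ => ?_
  rw [← mul_prod_erase univ (fun i => x - μ i) (mem_univ k)]
  field_simp [sub_ne_zero.2 (hx k)]

theorem interP_eval_apply (i : Fin m) :
    (interP a μ d).eval (μ i) = d i * ∏ k ∈ univ.erase i, (μ i - μ k) := by
  simp only [interP, eval_add, eval_mul, eval_sub, eval_X, eval_C, eval_prod, eval_finsetSum]
  rw [prod_eq_zero (mem_univ i) (sub_self _), mul_zero, zero_add,
    sum_eq_single_of_mem i (mem_univ i)]
  exact fun k _ hki => mul_eq_zero_of_right _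
    (prod_eq_zero (mem_erase.2 ⟨Ne.symm hki, mem_univ i⟩) (sub_self _))

theorem interP_eval_succ_mul_eval_neg (hμ : StrictAnti μ) (hd : ∀ k, 0 < d k) {j : Fin m}
    (hj : (j : ℕ) + 1 < m) :
    (interP a μ d).eval (μ ⟨j + 1, hj⟩) * (interP a μ d).eval (μ j) < 0 := by
  set j' : Fin m := ⟨j + 1, hj⟩
  have hjj' : j < j' := Fin.mk_lt_mk.2 (Nat.lt_succ_self j)
  -- every other pole lies on the same side of both `μ j'` and `μ j`
  have hE : 0 < ∏ k ∈ (univ.erase j).erase j', ((μ j' - μ k) * (μ j - μ k)) := by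
    refine prod_pos fun k hk => ?_
    obtain ⟨hkj', hkj⟩ : k ≠ j' ∧ k ≠ j := by simpa using hk
    rcases lt_or_gt_of_ne hkj with h | h
    · exact mul_pos_of_neg_of_neg (by linarith [hμ h, hμ hjj']) (by linarith [hμ h])
    · have hj'k : j' < k :=
        Fin.lt_def.2 (lt_of_le_of_ne (Nat.succ_le_of_lt h) (Fin.val_ne_of_ne hkj'.symm))
      exact mul_pos (by linarith [hμ hj'k]) (by linarith [hμ hj'k, hμ hjj'])
  have hj'j : j' ∈ univ.erase j := mem_erase.2 ⟨hjj'.ne', mem_univ _⟩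
  have hjj'' : j ∈ univ.erase j' := mem_erase.2 ⟨hjj'.ne, mem_univ _⟩
  rw [interP_eval_apply, interP_eval_apply, ← mul_prod_erase _ _ hj'j,
    ← mul_prod_erase _ _ hjj'', erase_right_comm]
  have hsplit : d j' * ((μ j' - μ j) * ∏ k ∈ (univ.erase j).erase j', (μ j' - μ k)) *
      (d j * ((μ j - μ j') * ∏ k ∈ (univ.erase j).erase j', (μ j - μ k))) =
      -(d j' * d j * (μ j - μ j') ^ 2 *
        ∏ k ∈ (univ.erase j).erase j', ((μ j' - μ k) * (μ j - μ k))) := by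
    rw [prod_mul_distrib]
    ring
  rw [hsplit, neg_lt_zero]
  exact mul_pos (mul_pos (mul_pos (hd j') (hd j)) (pow_pos (sub_pos.2 (hμ hjj')) 2)) hE

end InterP

/-- On each bounded interval `(μ_{j+1}, μ_j)` between consecutive poles, the equation
`h(λ) = g(λ)` (equivalently `p(λ) = 0`) has at least one and at most three real
solutions counted with multiplicity. -/
theorem stmt_11 {m : ℕ} (a : ℝ) (μ d : Fin m → ℝ)
    (hμ : StrictAnti μ) (hd : ∀ j, 0 < d j)
    (j : Fin m) (hj : (j : ℕ) + 1 < m) :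
    1 ≤ (((interP a μ d).roots).filter
        (fun x => μ ⟨(j : ℕ) + 1, hj⟩ < x ∧ x < μ j)).card ∧
      (((interP a μ d).roots).filter
        (fun x => μ ⟨(j : ℕ) + 1, hj⟩ < x ∧ x < μ j)).card ≤ 3 := by
  have : Nonempty (Fin m) := ⟨j⟩
  have hlt : μ ⟨j + 1, hj⟩ < μ j := hμ (Fin.mk_lt_mk.2 (Nat.lt_succ_self j))
  have hpole := fun x (hx : x ∈ Set.Ioo (μ ⟨j + 1, hj⟩) (μ j)) => hμ.ne_of_mem_Ioo_succ hj hx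
  have hQ : ∀ x ∈ Set.Ioo (μ ⟨j + 1, hj⟩) (μ j), (∏ k, (X - C (μ k))).eval x ≠ 0 := by
    intro x hx
    simpa [eval_prod, prod_ne_zero_iff, sub_eq_zero] using hpole x hx
  obtain ⟨hp, hcard⟩ := ne_zero_and_card_roots_filter_le_of_hasDerivAt isOpen_Ioo
    (Set.nonempty_Ioo.2 hlt) hQ 3 (secularDeriv a μ d)
    (fun i _ x hx => hasDerivAt_secularDeriv a i (hpole x hx))
    (fun x hx => (secularDeriv_three_neg a hd (hpole x hx)).ne) (interP a μ d) 1
    (fun x hx => by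
      beta_reduce
      rw [pow_one, interP_eval_eq_mul_secularDeriv a (hpole x hx),
        mul_div_cancel_left₀ _ (hQ x hx)])
  obtain ⟨x, hx, hpx⟩ := exists_mem_Ioo_eq_zero_of_mul_neg hlt.le (interP a μ d).continuousOn
    (interP_eval_succ_mul_eval_neg a hμ hd hj)
  exact ⟨Multiset.card_pos_iff_exists_mem.2
    ⟨x, Multiset.mem_filter.2 ⟨(mem_roots hp).2 hpx, hx⟩⟩, hcard⟩
end

section
/- With A = [[J, u], [−u*, a]], (J, u*) observable, J Hermitian with eigenvalues μ_j and g(λ) = −u*(λI − J)^{-1}u, the real eigenvalues of A are exactly the real solutions of λ − a = g(λ), and each interval (μ_{j+1}, μ_j) between consecutive eigenvalues of J contains at least one real eigenvalue of A (except possibly one such interval). -/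
/-!
Off the spectrum of `J`, the Schur complement of `t - J` in `t - A` is the scalar `t - a - g(t)`, so
`det (t - A) = det (t - J) · (t - a - g(t))`. At a real eigenvalue `t` of `J` a null vector `z` of
`t - J` is also a left null vector; observability gives `z* u ≠ 0`, which forces any null vector of
`t - A` to vanish, so `t` is not an eigenvalue of `A`.

Diagonalising `J = V diag(μ) V*` gives `t - a - g(t) = t - a + ∑ d_k / (t - μ_k)` with
`d_k = |(V* u)_k|² > 0` by observability. On each gap `(μ_{j+1}, μ_j)` this function is continuous
and runs from `+∞` to `-∞`, so it vanishes somewhere in every gap.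
-/

open Matrix

open Filter Topology Set

section Secular

variable {ι : Type*} [Fintype ι] {c e : ι → ℝ} {p q : ℝ}

lemma sum_div_sub_eq_mul_inv_add (c e : ι → ℝ) (p t : ℝ) [DecidablePred (e · = p)] :
    ∑ i, c i / (t - e i) =
      (∑ i with e i = p, c i) * (t - p)⁻¹ + ∑ i with e i ≠ p, c i / (t - e i) := by
  rw [← Finset.sum_filter_add_sum_filter_not Finset.univ (e · = p), Finset.sum_mul]
  congr 1
  exact Finset.sum_congr rfl fun i hi => by rw [(Finset.mem_filter.1 hi).2, div_eq_mul_inv]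

lemma tendsto_sum_div_sub_of_ne (c e : ι → ℝ) (p : ℝ) [DecidablePred (e · = p)] :
    Tendsto (fun t => ∑ i with e i ≠ p, c i / (t - e i)) (𝓝 p)
      (𝓝 (∑ i with e i ≠ p, c i / (p - e i))) :=
  tendsto_finsetSum _ fun _ hi =>
    tendsto_const_nhds.div (tendsto_id.sub_const _) (sub_ne_zero.2 (Finset.mem_filter.1 hi).2.symm)

lemma sum_pos_of_mem_range (hc : ∀ i, 0 < c i) (hp : p ∈ range e) [DecidablePred (e · = p)] :
    0 < ∑ i with e i = p, c i := by
  obtain ⟨i, rfl⟩ := hp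
  exact Finset.sum_pos (fun j _ => hc j) ⟨i, by simp⟩

lemma tendsto_sum_div_sub_nhdsGT (hc : ∀ i, 0 < c i) (hp : p ∈ range e) :
    Tendsto (fun t => ∑ i, c i / (t - e i)) (𝓝[>] p) atTop := by
  classical
  have hshift : Tendsto (fun t => t - p) (𝓝[>] p) (𝓝[>] 0) :=
    tendsto_nhdsWithin_of_tendsto_nhds_of_eventually_within _
      ((tendsto_id.sub_const p).mono_left nhdsWithin_le_nhds |>.trans (by rw [sub_self]))
      (eventually_nhdsWithin_of_forall fun t ht => mem_Ioi.2 (sub_pos.2 ht))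
  simp_rw [sum_div_sub_eq_mul_inv_add c e p]
  exact (hshift.inv_tendsto_nhdsGT_zero.const_mul_atTop (sum_pos_of_mem_range hc hp)).atTop_add
    ((tendsto_sum_div_sub_of_ne c e p).mono_left nhdsWithin_le_nhds)

lemma tendsto_sum_div_sub_nhdsLT (hc : ∀ i, 0 < c i) (hp : p ∈ range e) :
    Tendsto (fun t => ∑ i, c i / (t - e i)) (𝓝[<] p) atBot := by
  classical
  have hshift : Tendsto (fun t => t - p) (𝓝[<] p) (𝓝[<] 0) :=
    tendsto_nhdsWithin_of_tendsto_nhds_of_eventually_within _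
      ((tendsto_id.sub_const p).mono_left nhdsWithin_le_nhds |>.trans (by rw [sub_self]))
      (eventually_nhdsWithin_of_forall fun t ht => mem_Iio.2 (sub_neg.2 ht))
  simp_rw [sum_div_sub_eq_mul_inv_add c e p]
  exact (hshift.inv_tendsto_nhdsLT_zero.const_mul_atBot (sum_pos_of_mem_range hc hp)).atBot_add
    ((tendsto_sum_div_sub_of_ne c e p).mono_left nhdsWithin_le_nhds)

theorem exists_mem_Ioo_add_sum_div_sub_eq_zero {f : ℝ → ℝ} (hf : Continuous f)
    (hc : ∀ i, 0 < c i) (hpq : p < q) (hp : p ∈ range e) (hq : q ∈ range e)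
    (hgap : ∀ i, e i ∉ Ioo p q) :
    ∃ t ∈ Ioo p q, f t + ∑ i, c i / (t - e i) = 0 := by
  have hcont : ContinuousOn (fun t => f t + ∑ i, c i / (t - e i)) (Ioo p q) :=
    hf.continuousOn.add <| continuousOn_finsetSum _ fun i _ =>
      continuousOn_const.div (continuousOn_id.sub continuousOn_const)
        fun t ht => sub_ne_zero.2 fun h => hgap i (h ▸ ht)
  have hbot := ((hf.tendsto q).mono_left nhdsWithin_le_nhds).add_atBot
    (tendsto_sum_div_sub_nhdsLT hc hq)
  have htop := ((hf.tendsto p).mono_left nhdsWithin_le_nhds).add_atTop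
    (tendsto_sum_div_sub_nhdsGT hc hp)
  exact isPreconnected_Ioo.intermediate_value_Iii
    (le_principal_iff.2 (Ioo_mem_nhdsLT hpq)) (le_principal_iff.2 (Ioo_mem_nhdsGT hpq))
    hcont hbot htop (mem_univ 0)

end Secular

theorem StrictAnti.notMem_Ioo_of_mem_range {α : Type*} [LinearOrder α] {m : ℕ}
    {μ : Fin m → α} (hμ : StrictAnti μ) {j : ℕ} (hj : j + 1 < m) {s : α} (hs : s ∈ range μ) :
    s ∉ Ioo (μ ⟨j + 1, hj⟩) (μ ⟨j, Nat.lt_of_succ_lt hj⟩) := by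
  obtain ⟨k, rfl⟩ := hs
  rintro ⟨h₁, h₂⟩
  simp only [hμ.lt_iff_gt, Fin.lt_def] at h₁ h₂
  omega

namespace Matrix

def bordered {n : Type*} (J : Matrix n n ℂ) (u : n → ℂ) (a : ℂ) :
    Matrix (n ⊕ Unit) (n ⊕ Unit) ℂ :=
  fromBlocks J (replicateCol Unit u) (-replicateRow Unit (star u)) (of fun _ _ => a)

section

variable {n : Type*} [DecidableEq n]

theorem smul_one_sub_bordered (J : Matrix n n ℂ) (u : n → ℂ) (a t : ℂ) :
    t • 1 - bordered J u a =
      fromBlocks (t • 1 - J) (-replicateCol Unit u) (replicateRow Unit (star u))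
        (of fun _ _ => t - a) := by
  rw [bordered, ← fromBlocks_one, fromBlocks_smul, sub_eq_add_neg, fromBlocks_neg, fromBlocks_add]
  congr 1 <;> ext <;> simp [sub_eq_add_neg]

variable [Fintype n]

theorem mem_spectrum_iff_det_sub_eq_zero {K : Type*} [Field K] (M : Matrix n n K) (t : K) :
    t ∈ spectrum K M ↔ det (t • 1 - M) = 0 := by
  rw [spectrum.mem_iff, isUnit_iff_isUnit_det, isUnit_iff_ne_zero, not_not,
    Algebra.algebraMap_eq_smul_one]

theorem det_smul_one_sub_bordered {J : Matrix n n ℂ} (u : n → ℂ) (a : ℂ) {t : ℂ}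
    (ht : IsUnit (t • 1 - J).det) :
    det (t • 1 - bordered J u a) =
      det (t • 1 - J) * (t - a + star u ⬝ᵥ ((t • 1 - J)⁻¹ *ᵥ u)) := by
  have := (t • 1 - J).invertibleOfIsUnitDet ht
  rw [smul_one_sub_bordered, det_fromBlocks₁₁, invOf_eq_nonsing_inv, Matrix.mul_assoc,
    Matrix.mul_neg, ← replicateCol_mulVec, Matrix.mul_neg, replicateRow_mul_replicateCol,
    det_unique (n := Unit)]
  simp [sub_eq_add_neg]

theorem mem_spectrum_bordered_iff {J : Matrix n n ℂ} (u : n → ℂ) (a : ℂ) {t : ℂ}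
    (ht : t ∉ spectrum ℂ J) :
    t ∈ spectrum ℂ (bordered J u a) ↔ t - a = -(star u ⬝ᵥ ((t • 1 - J)⁻¹ *ᵥ u)) := by
  rw [mem_spectrum_iff_det_sub_eq_zero] at ht ⊢
  rw [det_smul_one_sub_bordered u a (isUnit_iff_ne_zero.2 ht), mul_eq_zero, or_iff_right ht,
    add_eq_zero_iff_eq_neg]

theorem smul_one_sub_bordered_mulVec_sumElim (J : Matrix n n ℂ) (u : n → ℂ) (a t : ℂ)
    (y : n → ℂ) (w : Unit → ℂ) :
    (t • 1 - bordered J u a) *ᵥ Sum.elim y w =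
      Sum.elim ((t • 1 - J) *ᵥ y - w () • u) (fun _ => star u ⬝ᵥ y + (t - a) * w ()) := by
  rw [smul_one_sub_bordered, fromBlocks_mulVec]
  ext (i | i) <;> simp [mulVec, dotProduct, sub_eq_add_neg, mul_comm]

theorem star_dotProduct_inv_mulVec_of_unitary {U : Matrix n n ℂ} (hU : U ∈ unitaryGroup n ℂ)
    {f : n → ℂ} (hf : ∀ i, f i ≠ 0) (u : n → ℂ) :
    star u ⬝ᵥ ((U * diagonal f * star U)⁻¹ *ᵥ u) =
      ∑ i, (Complex.normSq ((star U *ᵥ u) i) : ℂ) / f i := by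
  have hinv : (U * diagonal f * star U)⁻¹ = U * diagonal f⁻¹ * star U := by
    refine inv_eq_right_inv ?_
    calc U * diagonal f * star U * (U * diagonal f⁻¹ * star U)
        = U * (diagonal f * (star U * U) * diagonal f⁻¹) * star U := by
          simp only [Matrix.mul_assoc]
      _ = 1 := by
          rw [mem_unitaryGroup_iff'.1 hU, Matrix.mul_one, diagonal_mul_diagonal,
            show (fun i => f i * f⁻¹ i) = fun _ => 1 from funext fun i => mul_inv_cancel₀ (hf i),
            diagonal_one, Matrix.mul_one, mem_unitaryGroup_iff.1 hU]
  rw [hinv, ← mulVec_mulVec, ← mulVec_mulVec, dotProduct_mulVec,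
    show star u ᵥ* U = star (star U *ᵥ u) by
      rw [star_mulVec, star_eq_conjTranspose, conjTranspose_conjTranspose]]
  simp only [dotProduct, mulVec_diagonal, Pi.star_apply, Complex.normSq_eq_conj_mul_self,
    Pi.inv_apply]
  exact Finset.sum_congr rfl fun i _ => by rw [div_eq_mul_inv, Complex.star_def]; ring

namespace IsHermitian

theorem ofReal_mem_spectrum_iff {J : Matrix n n ℂ} (hJ : J.IsHermitian) (s : ℝ) :
    (s : ℂ) ∈ spectrum ℂ J ↔ s ∈ range hJ.eigenvalues := by
  simp [hJ.spectrum_eq_image_range]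

theorem star_dotProduct_inv_smul_one_sub_mulVec {J : Matrix n n ℂ} (hJ : J.IsHermitian) {t : ℂ}
    (ht : t ∉ spectrum ℂ J) (u : n → ℂ) :
    star u ⬝ᵥ ((t • 1 - J)⁻¹ *ᵥ u) =
      ∑ i, (Complex.normSq ((star (hJ.eigenvectorUnitary : Matrix n n ℂ) *ᵥ u) i) : ℂ) /
        (t - hJ.eigenvalues i) := by
  set U : Matrix n n ℂ := ↑hJ.eigenvectorUnitary
  have hU : U ∈ unitaryGroup n ℂ := hJ.eigenvectorUnitary.2
  have hdiag : t • 1 - J = U * diagonal (fun i => t - hJ.eigenvalues i) * star U := by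
    have hsub : diagonal (fun i => t - hJ.eigenvalues i) =
        t • 1 - diagonal (RCLike.ofReal ∘ hJ.eigenvalues) := by
      rw [smul_one_eq_diagonal, diagonal_sub]
      rfl
    conv_lhs => rw [hJ.spectral_theorem, Unitary.conjStarAlgAut_apply]
    rw [hsub, Matrix.mul_sub, Matrix.sub_mul, Matrix.mul_smul, Matrix.smul_mul, Matrix.mul_one,
      mem_unitaryGroup_iff.1 hU]
  rw [hdiag, star_dotProduct_inv_mulVec_of_unitary hU]
  intro i hi
  exact ht (by rw [hJ.spectrum_eq_image_range, sub_eq_zero.1 hi]; exact ⟨_, ⟨i, rfl⟩, rfl⟩)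

end IsHermitian

end

end Matrix

namespace IsObservable

variable {m : ℕ} {J : Matrix (Fin m) (Fin m) ℂ} {u : Fin m → ℂ}

theorem eq_zero (h : IsObservable J u) {lam : ℂ} {y : Fin m → ℂ} (hy : (lam • 1 - J) *ᵥ y = 0)
    (hu : star u ⬝ᵥ y = 0) : y = 0 := by
  set M := fromRows (lam • 1 - J) (replicateRow Unit (star u))
  have hker : LinearMap.ker M.mulVecLin = ⊥ := by
    have hrn := LinearMap.finrank_range_add_finrank_ker M.mulVecLin
    rw [← Matrix.rank, h lam, Module.finrank_fin_fun] at hrn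
    exact Submodule.finrank_eq_zero.1 (by omega)
  refine ker_mulVecLin_eq_bot_iff.1 hker y ?_
  rw [fromRows_mulVec, hy, replicateRow_mulVec_eq_const, hu]
  ext (_ | _) <;> rfl

theorem star_dotProduct_ne_zero (h : IsObservable J u) {lam : ℂ} {z : Fin m → ℂ}
    (hz : (lam • 1 - J) *ᵥ z = 0) (hz0 : z ≠ 0) : star u ⬝ᵥ z ≠ 0 :=
  fun hu => hz0 (h.eq_zero hz hu)

theorem star_eigenvectorUnitary_mulVec_ne_zero (h : IsObservable J u) (hJ : J.IsHermitian)
    (i : Fin m) : (star (hJ.eigenvectorUnitary : Matrix (Fin m) (Fin m) ℂ) *ᵥ u) i ≠ 0 := by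
  have hb : ((hJ.eigenvalues i : ℂ) • 1 - J) *ᵥ ⇑(hJ.eigenvectorBasis i) = 0 := by
    rw [sub_mulVec, hJ.mulVec_eigenvectorBasis, smul_mulVec, one_mulVec, Complex.coe_smul,
      sub_self]
  have hb0 : ⇑(hJ.eigenvectorBasis i) ≠ 0 :=
    (WithLp.ofLp_eq_zero 2).ne.2 (hJ.eigenvectorBasis.orthonormal.ne_zero i)
  have := h.star_dotProduct_ne_zero hb hb0
  -- the `i`-th entry of `U* u` is `b_i* u`, where `b_i` is the `i`-th column of `U`
  rwa [← star_ne_zero, star_dotProduct, star_star] at this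

theorem notMem_spectrum_bordered (h : IsObservable J u) (hJ : J.IsHermitian) (a : ℂ) {t : ℝ}
    (ht : (t : ℂ) ∈ spectrum ℂ J) : (t : ℂ) ∉ spectrum ℂ (bordered J u a) := by
  set N : Matrix (Fin m) (Fin m) ℂ := (t : ℂ) • 1 - J
  rw [mem_spectrum_iff_det_sub_eq_zero, ← exists_mulVec_eq_zero_iff] at ht ⊢
  obtain ⟨z, hz0, hz⟩ := ht
  rintro ⟨x, hx0, hx⟩
  obtain ⟨y, w, rfl⟩ : ∃ y w, x = Sum.elim y w := ⟨_, _, (Sum.elim_comp_inl_inr x).symm⟩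
  rw [smul_one_sub_bordered_mulVec_sumElim, ← Sum.elim_zero_zero, Sum.elim_eq_iff] at hx
  obtain ⟨h₁, h₂⟩ := hx
  -- `N` is Hermitian because `t` is real, so `z` is also a left null vector of `N`.
  have hzN : star z ⬝ᵥ (N *ᵥ y) = 0 := by
    have hN : star z ᵥ* N = star (N *ᵥ z) := by simp [star_mulVec, N, hJ.eq]
    rw [dotProduct_mulVec, hN, hz, star_zero, zero_dotProduct]
  have hw : w () = 0 := by
    rw [sub_eq_zero.1 h₁, dotProduct_smul, smul_eq_mul, mul_eq_zero, star_dotProduct,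
      star_eq_zero] at hzN
    exact hzN.resolve_right (h.star_dotProduct_ne_zero hz hz0)
  have hy : y = 0 :=
    h.eq_zero (by rwa [hw, zero_smul, sub_zero] at h₁) (by simpa [hw] using congrFun h₂ ())
  exact hx0 (by ext (i | ⟨⟩) <;> simp [hy, hw])

theorem exists_mem_Ioo_mem_spectrum_bordered (h : IsObservable J u) (hJ : J.IsHermitian)
    (a : ℝ) {p q : ℝ} (hpq : p < q) (hp : (p : ℂ) ∈ spectrum ℂ J) (hq : (q : ℂ) ∈ spectrum ℂ J)
    (hgap : ∀ s ∈ Ioo p q, (s : ℂ) ∉ spectrum ℂ J) :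
    ∃ t ∈ Ioo p q, (t : ℂ) ∈ spectrum ℂ (bordered J u a) := by
  obtain ⟨t, ht, hroot⟩ := exists_mem_Ioo_add_sum_div_sub_eq_zero (continuous_sub_right a)
    (fun i => Complex.normSq_pos.2 (h.star_eigenvectorUnitary_mulVec_ne_zero hJ i)) hpq
    ((hJ.ofReal_mem_spectrum_iff p).1 hp) ((hJ.ofReal_mem_spectrum_iff q).1 hq)
    (fun i hi => hgap _ hi ((hJ.ofReal_mem_spectrum_iff _).2 ⟨i, rfl⟩))
  have htJ := hgap t ht
  refine ⟨t, ht, (mem_spectrum_bordered_iff u a htJ).2 ?_⟩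
  rw [hJ.star_dotProduct_inv_smul_one_sub_mulVec htJ]
  have hroot := congrArg Complex.ofReal hroot
  push_cast at hroot
  linear_combination hroot

end IsObservable

/-- With `(J, u*)` observable and `μ_{n-1} < ⋯ < μ₁` the eigenvalues of `J`, the real
eigenvalues of `A = [[J, u], [-u*, a]]` are exactly the real solutions of
`λ - a = g(λ)` where `g(λ) = -u*(λI - J)⁻¹u`, and every interval `(μ_{j+1}, μ_j)`
between consecutive eigenvalues of `J`, except possibly one, contains a real
eigenvalue of `A`. -/
theorem stmt_13 {m : ℕ} (J : Matrix (Fin m) (Fin m) ℂ) (hJ : J.IsHermitian)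
    (u : Fin m → ℂ) (a : ℝ) (hobs : IsObservable J u)
    (μ : Fin m → ℝ) (hμ : StrictAnti μ)
    (hspec : spectrum ℂ J = Set.range fun j => (μ j : ℂ)) :
    let A : Matrix (Fin m ⊕ Unit) (Fin m ⊕ Unit) ℂ :=
      Matrix.fromBlocks J (Matrix.replicateCol Unit u) (-(Matrix.replicateRow Unit (star u)))
        (Matrix.of fun _ _ => (a : ℂ))
    (∀ t : ℝ, (t : ℂ) ∈ spectrum ℂ A ↔
        ((t : ℂ) ∉ spectrum ℂ J ∧
          (t : ℂ) - (a : ℂ) =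
            -(star u ⬝ᵥ (((t : ℂ) • (1 : Matrix (Fin m) (Fin m) ℂ) - J)⁻¹ *ᵥ u)))) ∧
      {j : ℕ | ∃ hj : j + 1 < m,
          ¬∃ t : ℝ, μ ⟨j + 1, hj⟩ < t ∧ t < μ ⟨j, Nat.lt_of_succ_lt hj⟩ ∧
            (t : ℂ) ∈ spectrum ℂ A}.ncard ≤ 1 := by
  intro A
  refine ⟨fun t => ?_, ?_⟩
  · by_cases ht : (t : ℂ) ∈ spectrum ℂ J
    · exact iff_of_false (hobs.notMem_spectrum_bordered hJ a ht) fun h => h.1 ht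
    · exact (mem_spectrum_bordered_iff u a ht).trans (and_iff_right ht).symm
  have hmem : ∀ s : ℝ, (s : ℂ) ∈ spectrum ℂ J ↔ s ∈ range μ := by simp [hspec]
  have hgap : ∀ j (hj : j + 1 < m), ∃ t : ℝ, μ ⟨j + 1, hj⟩ < t ∧
      t < μ ⟨j, Nat.lt_of_succ_lt hj⟩ ∧ (t : ℂ) ∈ spectrum ℂ A := fun j hj => by
    obtain ⟨t, ⟨ht₁, ht₂⟩, htA⟩ := hobs.exists_mem_Ioo_mem_spectrum_bordered hJ a
      (hμ (Fin.mk_lt_mk.2 (Nat.lt_succ_self j))) ((hmem _).2 ⟨_, rfl⟩) ((hmem _).2 ⟨_, rfl⟩)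
      fun s hs hsJ => hμ.notMem_Ioo_of_mem_range hj ((hmem s).1 hsJ) hs
    exact ⟨t, ht₁, ht₂, htA⟩
  simp [hgap]
end

section
/- The n×n block matrix A = [[J, u], [−u*, a]] with J Hermitian, u ∈ ℂ^{n-1}, a ∈ ℝ has at most one pair of non-real eigenvalues, and non-real eigenvalues occur in a conjugate pair λ, λ̄. -/
/-
Since `J` is Hermitian and `a` real, `A` is selfadjoint for the indefinite form `[x, y] = x* H y`
with `H = I ⊕ (-1)`, i.e. `Aᴴ H = H A`. As `H² = 1`, `Aᴴ` is similar to `A`, so the characteristic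
polynomial has real coefficients. Generalised eigenspaces of an `H`-selfadjoint operator for `α`
and `β` are `H`-orthogonal unless `β = conj α`; hence for non-real `α, β` with `β ≠ conj α`
(possibly `α = β`) their sum is `H`-isotropic. An isotropic subspace meets the hyperplane
`z_n = 0`, on which the form is positive definite, only in `0`, so it has dimension at most `1`.
Thus every non-real root is simple, and any two non-real roots are equal or conjugate.
-/

open Matrix Polynomial Module ComplexConjugate

section SelfAdjoint

variable {V : Type*} [AddCommGroup V] [Module ℂ V] {B : V →ₗ⋆[ℂ] V →ₗ[ℂ] ℂ}
  {f : Module.End ℂ V}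

lemma sesq_sub_smul_sub_sesq_sub_smul (hf : ∀ x y, B (f x) y = B x (f y)) (α β : ℂ) (x y : V) :
    B ((f - α • 1) x) y - B x ((f - β • 1) y) = (β - conj α) * B x y := by
  simp only [LinearMap.sub_apply, LinearMap.smul_apply, Module.End.one_apply, map_sub,
    LinearMap.map_smulₛₗ, hf, smul_eq_mul, RingHom.id_apply]
  ring

lemma sesq_eq_zero_of_pow_sub_smul_eq_zero (hf : ∀ x y, B (f x) y = B x (f y)) {α β : ℂ}
    (hαβ : conj α ≠ β) (k l : ℕ) {x y : V} (hx : ((f - α • 1) ^ k) x = 0)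
    (hy : ((f - β • 1) ^ l) y = 0) : B x y = 0 := by
  induction k generalizing l x y with
  | zero => simp_all
  | succ k ihk =>
    induction l generalizing x y with
    | zero => simp_all
    | succ l ihl =>
      have h := sesq_sub_smul_sub_sesq_sub_smul hf α β x y
      rw [pow_succ, Module.End.mul_apply] at hx hy
      rw [ihk (l + 1) hx (by rwa [pow_succ, Module.End.mul_apply]),
        ihl (by rwa [pow_succ, Module.End.mul_apply]) hy, sub_zero] at h
      exact (mul_eq_zero.mp h.symm).resolve_left (sub_ne_zero.mpr hαβ.symm)

lemma sesq_eq_zero_of_mem_maxGenEigenspace (hf : ∀ x y, B (f x) y = B x (f y)) {α β : ℂ}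
    (hαβ : conj α ≠ β) {x y : V} (hx : x ∈ f.maxGenEigenspace α)
    (hy : y ∈ f.maxGenEigenspace β) : B x y = 0 := by
  obtain ⟨k, hk⟩ := (f.mem_maxGenEigenspace α x).mp hx
  obtain ⟨l, hl⟩ := (f.mem_maxGenEigenspace β y).mp hy
  exact sesq_eq_zero_of_pow_sub_smul_eq_zero hf hαβ k l hk hl

lemma sesq_self_eq_zero_of_mem_sup_maxGenEigenspace (hf : ∀ x y, B (f x) y = B x (f y))
    {α β : ℂ} (hα : conj α ≠ α) (hβ : conj β ≠ β) (hαβ : conj α ≠ β) {z : V}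
    (hz : z ∈ f.maxGenEigenspace α ⊔ f.maxGenEigenspace β) : B z z = 0 := by
  have hβα : conj β ≠ α := fun h => hαβ (by rw [← h, Complex.conj_conj])
  obtain ⟨x, hx, y, hy, rfl⟩ := Submodule.mem_sup.mp hz
  simp only [map_add, LinearMap.add_apply, sesq_eq_zero_of_mem_maxGenEigenspace hf hα hx hx,
    sesq_eq_zero_of_mem_maxGenEigenspace hf hαβ hx hy,
    sesq_eq_zero_of_mem_maxGenEigenspace hf hβα hy hx,
    sesq_eq_zero_of_mem_maxGenEigenspace hf hβ hy hy, add_zero]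

end SelfAdjoint

lemma Matrix.toLinearMapₛₗ₂'_starRingEnd_apply {n : Type*} [Fintype n] [DecidableEq n]
    (H : Matrix n n ℂ) (x y : n → ℂ) :
    Matrix.toLinearMapₛₗ₂' ℂ (starRingEnd ℂ) (RingHom.id ℂ) H x y = star x ⬝ᵥ (H *ᵥ y) := by
  simp only [Matrix.toLinearMapₛₗ₂'_apply, dotProduct, mulVec, Finset.mul_sum, smul_eq_mul,
    RingHom.id_apply, Pi.star_apply, RCLike.star_def]
  exact Finset.sum_congr rfl fun _ _ => Finset.sum_congr rfl fun _ _ => by ring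

lemma Matrix.toLinearMapₛₗ₂'_toLin'_left_eq_right {n : Type*} [Fintype n] [DecidableEq n]
    {A H : Matrix n n ℂ} (hAH : Aᴴ * H = H * A) (x y : n → ℂ) :
    Matrix.toLinearMapₛₗ₂' ℂ (starRingEnd ℂ) (RingHom.id ℂ) H (A.toLin' x) y =
      Matrix.toLinearMapₛₗ₂' ℂ (starRingEnd ℂ) (RingHom.id ℂ) H x (A.toLin' y) := by
  simp only [Matrix.toLinearMapₛₗ₂'_starRingEnd_apply, toLin'_apply, star_mulVec,
    ← dotProduct_mulVec, mulVec_mulVec, hAH]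

lemma star_dotProduct_fromBlocks_one_neg_one_mulVec {ι κ R : Type*} [Fintype ι] [Fintype κ]
    [DecidableEq ι] [DecidableEq κ] [Ring R] [StarRing R] (z : ι ⊕ κ → R) :
    star z ⬝ᵥ (fromBlocks 1 0 0 (-1) *ᵥ z) =
      star (z ∘ Sum.inl) ⬝ᵥ (z ∘ Sum.inl) - star (z ∘ Sum.inr) ⬝ᵥ (z ∘ Sum.inr) := by
  simp [fromBlocks_mulVec, dotProduct, Fintype.sum_sum_type, sub_eq_add_neg, neg_mulVec]

open ComplexOrder in
lemma finrank_le_card_of_isotropic {ι κ : Type*} [Fintype ι] [Fintype κ] [DecidableEq ι]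
    [DecidableEq κ] (W : Submodule ℂ (ι ⊕ κ → ℂ))
    (hW : ∀ z ∈ W, star z ⬝ᵥ (fromBlocks 1 0 0 (-1) *ᵥ z) = 0) :
    finrank ℂ W ≤ Fintype.card κ := by
  let π : W →ₗ[ℂ] (κ → ℂ) := (LinearMap.funLeft ℂ ℂ Sum.inr).comp W.subtype
  have hπ : Function.Injective π := by
    rw [← LinearMap.ker_eq_bot, LinearMap.ker_eq_bot']
    rintro ⟨z, hz⟩ hzκ
    have hzκ : z ∘ Sum.inr = 0 := hzκ
    have hzι : z ∘ Sum.inl = 0 := by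
      have := hW z hz
      rwa [star_dotProduct_fromBlocks_one_neg_one_mulVec, hzκ, dotProduct_zero, sub_zero,
        dotProduct_star_self_eq_zero] at this
    ext (i | k)
    · exact congrFun hzι i
    · exact congrFun hzκ k
  simpa using LinearMap.finrank_le_finrank_of_injective hπ

lemma charpoly_map_conj_of_conjTranspose_mul_eq {n : Type*} [Fintype n] [DecidableEq n]
    {A H : Matrix n n ℂ} (hH : H * H = 1) (hAH : Aᴴ * H = H * A) :
    A.charpoly.map (starRingEnd ℂ) = A.charpoly := by
  have hA : Aᴴ = H * A * H := by rw [← hAH, Matrix.mul_assoc, hH, Matrix.mul_one]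
  rw [← charpoly_map, ← charpoly_transpose, ← transpose_map,
    show Aᵀ.map (starRingEnd ℂ) = Aᴴ from rfl, hA, Matrix.mul_assoc,
    charpoly_mul_comm, Matrix.mul_assoc, hH, Matrix.mul_one]

lemma Polynomial.conj_mem_roots_of_map_conj_eq {p : ℂ[X]} (hp : p.map (starRingEnd ℂ) = p)
    {z : ℂ} (hz : z ∈ p.roots) : conj z ∈ p.roots := by
  obtain ⟨hp0, hroot⟩ := mem_roots'.mp hz
  exact mem_roots'.mpr ⟨hp0, hp ▸ hroot.map⟩

lemma Multiset.card_le_two_of_nodup {α : Type*} [DecidableEq α] {s : Multiset α} (hs : s.Nodup)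
    (g : α → α) (h : ∀ a ∈ s, ∀ b ∈ s, b = a ∨ b = g a) : s.card ≤ 2 := by
  rcases s.empty_or_exists_mem with rfl | ⟨a, ha⟩
  · simp
  rw [← Multiset.toFinset_card_of_nodup hs]
  calc s.toFinset.card ≤ ({a, g a} : Finset α).card :=
        Finset.card_le_card fun b hb => by simpa using h a ha b (Multiset.mem_toFinset.mp hb)
    _ ≤ 2 := Finset.card_le_two

lemma conjTranspose_fromBlocks_mul_fromBlocks_one_neg_one {ι κ R : Type*} [Fintype ι]
    [Fintype κ] [DecidableEq ι] [DecidableEq κ] [Ring R] [StarRing R] {J : Matrix ι ι R}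
    {D : Matrix κ κ R} (hJ : J.IsHermitian) (hD : D.IsHermitian) (C : Matrix ι κ R) :
    (fromBlocks J C (-Cᴴ) D)ᴴ * fromBlocks 1 0 0 (-1) =
      fromBlocks 1 0 0 (-1) * fromBlocks J C (-Cᴴ) D := by
  simp [fromBlocks_conjTranspose, fromBlocks_multiply, hJ.eq, hD.eq]

section Pontryagin

variable {ι κ : Type*} [Fintype ι] [Fintype κ] [DecidableEq ι] [DecidableEq κ]
  {A : Matrix (ι ⊕ κ) (ι ⊕ κ) ℂ}

lemma count_roots_charpoly_eq_finrank (z : ℂ) :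
    A.charpoly.roots.count z = finrank ℂ (Module.End.maxGenEigenspace A.toLin' z) := by
  rw [count_roots, ← charpoly_toLin', LinearMap.finrank_maxGenEigenspace_eq]

lemma finrank_sup_maxGenEigenspace_le_card
    (hAH : Aᴴ * fromBlocks 1 0 0 (-1) = fromBlocks 1 0 0 (-1) * A)
    {α β : ℂ} (hα : α.im ≠ 0) (hβ : β.im ≠ 0) (hαβ : conj α ≠ β) :
    finrank ℂ ↥(Module.End.maxGenEigenspace A.toLin' α ⊔ Module.End.maxGenEigenspace A.toLin' β)
      ≤ Fintype.card κ :=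
  finrank_le_card_of_isotropic _ fun z hz => by
    rw [← toLinearMapₛₗ₂'_starRingEnd_apply]
    exact sesq_self_eq_zero_of_mem_sup_maxGenEigenspace
      (toLinearMapₛₗ₂'_toLin'_left_eq_right hAH)
      (mt Complex.conj_eq_iff_im.mp hα) (mt Complex.conj_eq_iff_im.mp hβ) hαβ hz

lemma count_roots_charpoly_le_card
    (hAH : Aᴴ * fromBlocks 1 0 0 (-1) = fromBlocks 1 0 0 (-1) * A)
    {α : ℂ} (hα : α.im ≠ 0) : A.charpoly.roots.count α ≤ Fintype.card κ := by
  have := finrank_sup_maxGenEigenspace_le_card hAH hα hα (mt Complex.conj_eq_iff_im.mp hα)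
  rwa [sup_idem, ← count_roots_charpoly_eq_finrank] at this

lemma count_roots_charpoly_add_count_le_card
    (hAH : Aᴴ * fromBlocks 1 0 0 (-1) = fromBlocks 1 0 0 (-1) * A)
    {α β : ℂ} (hα : α.im ≠ 0) (hβ : β.im ≠ 0) (hαβ : conj α ≠ β) (hne : α ≠ β) :
    A.charpoly.roots.count α + A.charpoly.roots.count β ≤ Fintype.card κ := by
  have hdisj : Module.End.maxGenEigenspace A.toLin' α ⊓
      Module.End.maxGenEigenspace A.toLin' β = ⊥ :=
    (Module.End.disjoint_genEigenspace _ hne ⊤ ⊤).eq_bot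
  rw [count_roots_charpoly_eq_finrank, count_roots_charpoly_eq_finrank,
    ← Submodule.finrank_sup_add_finrank_inf_eq, hdisj, finrank_bot, add_zero]
  exact finrank_sup_maxGenEigenspace_le_card hAH hα hβ hαβ

end Pontryagin

/-- The matrix `A = [[J, u], [-u*, a]]` with `J` Hermitian and `a` real has at most one
pair of non-real eigenvalues (counted with multiplicity in the characteristic
polynomial), and its non-real eigenvalues occur in a conjugate pair `λ, λ̄`. -/
theorem stmt_14 {m : ℕ} (J : Matrix (Fin m) (Fin m) ℂ) (hJ : J.IsHermitian)
    (u : Fin m → ℂ) (a : ℝ) :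
    let A : Matrix (Fin m ⊕ Unit) (Fin m ⊕ Unit) ℂ :=
      Matrix.fromBlocks J (Matrix.replicateCol Unit u) (-(Matrix.replicateRow Unit (star u)))
        (Matrix.of fun _ _ => (a : ℂ))
    ((A.charpoly.roots).filter (fun z => z.im ≠ 0)).card ≤ 2 ∧
      ∀ z ∈ A.charpoly.roots, z.im ≠ 0 → (starRingEnd ℂ) z ∈ A.charpoly.roots := by
  intro A
  have hD : (of fun _ _ => (a : ℂ) : Matrix Unit Unit ℂ).IsHermitian := by ext; simp
  have hAH : Aᴴ * fromBlocks 1 0 0 (-1) = fromBlocks 1 0 0 (-1) * A := by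
    simpa [A, conjTranspose_replicateCol] using
      conjTranspose_fromBlocks_mul_fromBlocks_one_neg_one hJ hD (replicateCol Unit u)
  have hH : (fromBlocks 1 0 0 (-1) : Matrix (Fin m ⊕ Unit) (Fin m ⊕ Unit) ℂ) *
      fromBlocks 1 0 0 (-1) = 1 := by simp [fromBlocks_multiply]
  refine ⟨Multiset.card_le_two_of_nodup ?_ (starRingEnd ℂ) ?_, fun z hz _ =>
    conj_mem_roots_of_map_conj_eq (charpoly_map_conj_of_conjTranspose_mul_eq hH hAH) hz⟩
  · refine Multiset.nodup_iff_count_le_one.mpr fun z => ?_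
    by_cases hz : z.im ≠ 0
    · rw [Multiset.count_filter_of_pos (p := fun z : ℂ => z.im ≠ 0) hz]
      simpa using count_roots_charpoly_le_card hAH hz
    · rw [Multiset.count_filter_of_neg (p := fun z : ℂ => z.im ≠ 0) hz]
      exact zero_le_one
  · intro α hα β hβ
    rw [Multiset.mem_filter] at hα hβ
    by_contra! h
    have hsum := count_roots_charpoly_add_count_le_card hAH hα.2 hβ.2 (Ne.symm h.2) (Ne.symm h.1)
    rw [Fintype.card_unit] at hsum
    have := Multiset.count_pos.mpr hα.1
    have := Multiset.count_pos.mpr hβ.1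
    omega
end
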